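/- Let A be an m×n quaternionic matrix and B an n×m quaternionic matrix. Then Sdet(I_m − AB) = Sdet(I_n − BA). -/

import Mathlib

open scoped Quaternion

/-- The simplex part of a quaternion `x = a + j·b`: the complex number `a = x₀ + x₁·i`. -/
noncomputable def qSimplex (x : ℍ[ℝ]) : ℂ := ⟨x.re, x.imI⟩

/-- The perplex part of a quaternion `x = a + j·b`: the complex number `b = x₂ − x₃·i`. -/
noncomputable def qPerplex (x : ℍ[ℝ]) : ℂ := ⟨x.imJ, -x.imK⟩

/-- The simplex part of a quaternionic matrix. -/
noncomputable def matSimplex {α β : Type*} (M : Matrix α β ℍ[ℝ]) : Matrix α β ℂ :=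
  Matrix.of fun r s => qSimplex (M r s)

/-- The perplex part of a quaternionic matrix. -/
noncomputable def matPerplex {α β : Type*} (M : Matrix α β ℍ[ℝ]) : Matrix α β ℂ :=
  Matrix.of fun r s => qPerplex (M r s)

/-- The complex-block representation `ψ(M) = [[Mˢ, −conj(Mᵖ)], [Mᵖ, conj(Mˢ)]]`
of a quaternionic matrix `M = Mˢ + j·Mᵖ`. -/
noncomputable def psi {α β : Type*} (M : Matrix α β ℍ[ℝ]) : Matrix (α ⊕ α) (β ⊕ β) ℂ :=
  Matrix.fromBlocks (matSimplex M) (-(matPerplex M).map (starRingEnd ℂ))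
    (matPerplex M) ((matSimplex M).map (starRingEnd ℂ))

/-- The Study determinant of a square quaternionic matrix: `Sdet(M) = det(ψ(M))`. -/
noncomputable def Sdet {α : Type*} [Fintype α] [DecidableEq α] (M : Matrix α α ℍ[ℝ]) : ℂ :=
  (psi M).det

/-!
Writing a quaternion as `a + j·b` with `a b : ℂ` gives the embedding `ℍ ↪ M₂(ℂ)`,
`a + j·b ↦ [[a, -conj b], [b, conj a]]`, and `ψ` is this embedding applied entrywise
(with the rows and columns regrouped into blocks). Hence `ψ` is additive, unital and
multiplicative, also for rectangular matrices, so `Sdet (1 - A * B) = det (1 - ψ A * ψ B)`,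
and the claim is Sylvester's determinant identity `det (1 - X * Y) = det (1 - Y * X)` over `ℂ`.
-/

open Matrix ComplexConjugate

lemma qSimplex_add (x y : ℍ[ℝ]) : qSimplex (x + y) = qSimplex x + qSimplex y := rfl

lemma qPerplex_add (x y : ℍ[ℝ]) : qPerplex (x + y) = qPerplex x + qPerplex y := by
  apply Complex.ext <;> simp [qPerplex]; ring

noncomputable def qSimplexAddGroupHom : ℍ[ℝ] →+ ℂ := AddMonoidHom.mk' qSimplex qSimplex_add

noncomputable def qPerplexAddGroupHom : ℍ[ℝ] →+ ℂ := AddMonoidHom.mk' qPerplex qPerplex_add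

lemma qSimplex_sub (x y : ℍ[ℝ]) : qSimplex (x - y) = qSimplex x - qSimplex y :=
  map_sub qSimplexAddGroupHom x y

lemma qPerplex_sub (x y : ℍ[ℝ]) : qPerplex (x - y) = qPerplex x - qPerplex y :=
  map_sub qPerplexAddGroupHom x y

lemma qSimplex_sum {ι : Type*} (s : Finset ι) (f : ι → ℍ[ℝ]) :
    qSimplex (∑ i ∈ s, f i) = ∑ i ∈ s, qSimplex (f i) :=
  map_sum qSimplexAddGroupHom f s

lemma qPerplex_sum {ι : Type*} (s : Finset ι) (f : ι → ℍ[ℝ]) :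
    qPerplex (∑ i ∈ s, f i) = ∑ i ∈ s, qPerplex (f i) :=
  map_sum qPerplexAddGroupHom f s

lemma qSimplex_mul (x y : ℍ[ℝ]) :
    qSimplex (x * y) = qSimplex x * qSimplex y - conj (qPerplex x) * qPerplex y := by
  apply Complex.ext <;> simp [qSimplex, qPerplex, Quaternion.re_mul, Quaternion.imI_mul] <;> ring

lemma qPerplex_mul (x y : ℍ[ℝ]) :
    qPerplex (x * y) = conj (qSimplex x) * qPerplex y + qPerplex x * qSimplex y := by
  apply Complex.ext <;> simp [qSimplex, qPerplex, Quaternion.imJ_mul, Quaternion.imK_mul] <;> ring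

section

variable {α β γ : Type*}

lemma matSimplex_mul [Fintype β] (M : Matrix α β ℍ[ℝ]) (N : Matrix β γ ℍ[ℝ]) :
    matSimplex (M * N) = matSimplex M * matSimplex N - (matPerplex M).map conj * matPerplex N := by
  ext r s
  simp [matSimplex, matPerplex, mul_apply, qSimplex_sum, qSimplex_mul]

lemma matPerplex_mul [Fintype β] (M : Matrix α β ℍ[ℝ]) (N : Matrix β γ ℍ[ℝ]) :
    matPerplex (M * N) = (matSimplex M).map conj * matPerplex N + matPerplex M * matSimplex N := by
  ext r s
  simp [matSimplex, matPerplex, mul_apply, qPerplex_sum, qPerplex_mul, Finset.sum_add_distrib]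

lemma matSimplex_sub (M N : Matrix α β ℍ[ℝ]) : matSimplex (M - N) = matSimplex M - matSimplex N :=
  ext fun r s => qSimplex_sub (M r s) (N r s)

lemma matPerplex_sub (M N : Matrix α β ℍ[ℝ]) : matPerplex (M - N) = matPerplex M - matPerplex N :=
  ext fun r s => qPerplex_sub (M r s) (N r s)

lemma matSimplex_one [DecidableEq α] : matSimplex (1 : Matrix α α ℍ[ℝ]) = 1 := by
  ext r s
  by_cases h : r = s <;> simp [matSimplex, one_apply, h, qSimplex, Complex.ext_iff]

lemma matPerplex_one [DecidableEq α] : matPerplex (1 : Matrix α α ℍ[ℝ]) = 0 := by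
  ext r s
  by_cases h : r = s <;> simp [matPerplex, one_apply, h, qPerplex, Complex.ext_iff]

lemma psi_mul [Fintype β] (M : Matrix α β ℍ[ℝ]) (N : Matrix β γ ℍ[ℝ]) :
    psi (M * N) = psi M * psi N := by
  simp only [psi, fromBlocks_multiply, matSimplex_mul, matPerplex_mul, Matrix.map_mul,
    Matrix.map_sub _ (map_sub conj), Matrix.map_add _ (map_add conj),
    Matrix.map_map, Function.comp_def, starRingEnd_self_apply, map_id', Matrix.neg_mul, Matrix.mul_neg]
  congr 1 <;> abel

lemma psi_sub (M N : Matrix α β ℍ[ℝ]) : psi (M - N) = psi M - psi N := by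
  simp only [psi, matSimplex_sub, matPerplex_sub, Matrix.map_sub _ (map_sub conj),
    sub_eq_add_neg (fromBlocks _ _ _ _), fromBlocks_neg, fromBlocks_add]
  congr 1
  abel

lemma psi_one [DecidableEq α] : psi (1 : Matrix α α ℍ[ℝ]) = 1 := by
  simp [psi, matSimplex_one, matPerplex_one, fromBlocks_one]

end

theorem sdet_one_sub_mul_comm {m n : ℕ}
    (A : Matrix (Fin m) (Fin n) ℍ[ℝ]) (B : Matrix (Fin n) (Fin m) ℍ[ℝ]) :
    Sdet (1 - A * B) = Sdet (1 - B * A) := by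
  simp only [Sdet, psi_sub, psi_mul, psi_one]
  exact det_one_sub_mul_comm _ _
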